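/- arXiv:2102.12688 — 4 statements merged into one kernel-verified Lean document; each statement's English description precedes it below -/
import Mathlib

section
/- For a real number $q$ with $q > 0$ and $q \ne 1$, and for all integers $n \ge 1$ and $r \ge 1$, the $q$-hyperharmonic numbers satisfy $H_n^{(r+1)}(q) = \frac{[n+r]_q}{[r]_q} H_n^{(r)}(q) - \frac{q^{r-1}}{[r]_q} \binom{n+r-1}{r}_q$. -/
/-!
Cleared of denominators, the identity reads
`q [r] H_{n+1}^{(r+1)} = q [n+r+1] H_{n+1}^{(r)} - q^r C(n+r, r)_q`, which holds for `r = 0` as well.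
It follows by induction on `r` and then on `n`: expanding `H_{n+2}^{(r+2)}` and `H_{n+2}^{(r+1)}`
by `H_{n+1}^{(s+1)} = H_n^{(s+1)} + q^{n+1} H_{n+1}^{(s)}`, the hypotheses at `(r+1, n+1)` and
`(r, n+2)` combine linearly with `[k+1] = [k] + q^k` and the `q`-Pascal rule into the claim at
`(r+1, n+2)`.
-/

/-- The `q`-integer `[n]_q = (1 - q^n)/(1 - q)`. -/
noncomputable def qint (q : ℝ) (n : ℕ) : ℝ := (1 - q ^ n) / (1 - q)

/-- The `q`-factorial `[n]_q! = [n]_q [n-1]_q ⋯ [1]_q`, with `[0]_q! = 1`. -/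
noncomputable def qfact (q : ℝ) : ℕ → ℝ
  | 0 => 1
  | n + 1 => qint q (n + 1) * qfact q n

/-- The `q`-binomial coefficient `C(n,k)_q = [n]_q!/([k]_q! [n-k]_q!)`, equal to `0` for `k > n`. -/
noncomputable def qbinom (q : ℝ) (n k : ℕ) : ℝ :=
  if k ≤ n then qfact q n / (qfact q k * qfact q (n - k)) else 0

/-- The `q`-hyperharmonic numbers: `H_n^{(0)}(q) = 1/(q [n]_q)` and
`H_n^{(r)}(q) = ∑_{j=1}^n q^j H_j^{(r-1)}(q)` for `r ≥ 1` (so `H_0^{(r)}(q) = 0`). -/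
noncomputable def qhyp (q : ℝ) : ℕ → ℕ → ℝ
  | 0, n => 1 / (q * qint q n)
  | r + 1, n => ∑ j ∈ Finset.Icc 1 n, q ^ j * qhyp q r j

section
variable {q : ℝ}

lemma qint_ne_zero (hq : 0 < q) (hq1 : q ≠ 1) {k : ℕ} (hk : k ≠ 0) : qint q k ≠ 0 := by
  refine div_ne_zero (sub_ne_zero.mpr fun h => ?_) (sub_ne_zero.mpr hq1.symm)
  exact hq1 ((pow_eq_one_iff_of_nonneg hq.le hk).mp h.symm)

lemma qint_mul_one_sub (hq1 : q ≠ 1) (n : ℕ) : qint q n * (1 - q) = 1 - q ^ n :=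
  div_mul_cancel₀ _ (sub_ne_zero.mpr hq1.symm)

lemma qint_one (hq1 : q ≠ 1) : qint q 1 = 1 := by
  simp [qint, div_self (sub_ne_zero.mpr hq1.symm)]

lemma qint_add (hq1 : q ≠ 1) (m n : ℕ) : qint q (m + n) = qint q m + q ^ m * qint q n := by
  have h := sub_ne_zero.mpr hq1.symm
  simp only [qint]
  field_simp
  ring

lemma qint_succ (hq1 : q ≠ 1) (n : ℕ) : qint q (n + 1) = qint q n + q ^ n := by
  rw [qint_add hq1, qint_one hq1, mul_one]

lemma qfact_ne_zero (hq : 0 < q) (hq1 : q ≠ 1) (n : ℕ) : qfact q n ≠ 0 := by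
  induction n with
  | zero => exact one_ne_zero
  | succ n ih => exact mul_ne_zero (qint_ne_zero hq hq1 n.succ_ne_zero) ih

lemma qbinom_zero_right (hq : 0 < q) (hq1 : q ≠ 1) (n : ℕ) : qbinom q n 0 = 1 := by
  simp [qbinom, qfact, qfact_ne_zero hq hq1 n]

lemma qbinom_self (hq : 0 < q) (hq1 : q ≠ 1) (n : ℕ) : qbinom q n n = 1 := by
  simp [qbinom, qfact, qfact_ne_zero hq hq1 n]

lemma qbinom_pascal (hq : 0 < q) (hq1 : q ≠ 1) (k d : ℕ) :
    qbinom q (k + d + 2) (k + 1) =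
      qbinom q (k + d + 1) (k + 1) + q ^ (d + 1) * qbinom q (k + d + 1) k := by
  simp only [qbinom, if_pos (by omega : k + 1 ≤ k + d + 2), if_pos (by omega : k + 1 ≤ k + d + 1),
    if_pos (by omega : k ≤ k + d + 1), show k + d + 2 - (k + 1) = d + 1 by omega,
    show k + d + 1 - (k + 1) = d by omega, show k + d + 1 - k = d + 1 by omega]
  have hsplit : qint q (k + d + 2) = qint q (d + 1) + q ^ (d + 1) * qint q (k + 1) := by
    rw [← qint_add hq1]; congr 1; omega
  rw [show qfact q (k + d + 2) = qint q (k + d + 2) * qfact q (k + d + 1) from rfl,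
    show qfact q (k + 1) = qint q (k + 1) * qfact q k from rfl,
    show qfact q (d + 1) = qint q (d + 1) * qfact q d from rfl, hsplit]
  have := qfact_ne_zero hq hq1 k
  have := qfact_ne_zero hq hq1 d
  have := qint_ne_zero hq hq1 k.succ_ne_zero
  have := qint_ne_zero hq hq1 d.succ_ne_zero
  field_simp

lemma qhyp_succ_succ (r n : ℕ) :
    qhyp q (r + 1) (n + 1) = qhyp q (r + 1) n + q ^ (n + 1) * qhyp q r (n + 1) := by
  rw [qhyp, qhyp, Finset.sum_Icc_succ_top (by omega)]

lemma mul_qint_mul_qhyp_zero (hq : 0 < q) (hq1 : q ≠ 1) {n : ℕ} (hn : n ≠ 0) :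
    q * qint q n * qhyp q 0 n = 1 := by
  rw [qhyp, mul_one_div_cancel (mul_ne_zero hq.ne' (qint_ne_zero hq hq1 hn))]

lemma mul_qhyp_one (hq : 0 < q) (hq1 : q ≠ 1) (r : ℕ) : q * qhyp q r 1 = q ^ r := by
  induction r with
  | zero => simpa [qint_one hq1] using mul_qint_mul_qhyp_zero hq hq1 one_ne_zero
  | succ r ih =>
    rw [qhyp, Finset.Icc_self, Finset.sum_singleton, pow_one, pow_succ, ← ih]
    ring

lemma qint_mul_qhyp_succ (hq : 0 < q) (hq1 : q ≠ 1) (r n : ℕ) :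
    q * qint q r * qhyp q (r + 1) (n + 1) =
      q * qint q (n + r + 1) * qhyp q r (n + 1) - q ^ r * qbinom q (n + r) r := by
  induction r generalizing n with
  | zero =>
    rw [show qint q 0 = 0 by simp [qint], Nat.add_zero, mul_qint_mul_qhyp_zero hq hq1 n.succ_ne_zero,
      qbinom_zero_right hq hq1]
    ring
  | succ r ihr =>
    induction n with
    | zero =>
      linear_combination (norm := ring_nf) qint q (r + 1) * mul_qhyp_one hq hq1 (r + 2)
        - (qint q (r + 1) + q ^ (r + 1)) * mul_qhyp_one hq hq1 (r + 1)
        - q ^ (r + 1) * qint_mul_one_sub hq1 (r + 1) + q ^ (r + 1) * qbinom_self hq hq1 (r + 1)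
        - q * qhyp q (r + 1) 1 * qint_succ hq1 (r + 1)
    | succ n ihn =>
      linear_combination (norm := ring_nf)
        q * qint q (r + 1) * qhyp_succ_succ (r + 1) (n + 1) + ihn
        - q * qint q (n + r + 2) * qhyp_succ_succ r (n + 1) + q ^ (n + 2) * ihr (n + 1)
        + q ^ (r + 1) * qbinom_pascal hq hq1 r n
        + q ^ (n + 3) * qhyp q (r + 1) (n + 2) * qint_succ hq1 r
        - q * qhyp q (r + 1) (n + 2) * qint_succ hq1 (n + r + 2)
end

/-- For `q > 0`, `q ≠ 1` and integers `n, r ≥ 1`,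
`H_n^{(r+1)}(q) = ([n+r]_q/[r]_q) H_n^{(r)}(q) - (q^{r-1}/[r]_q) C(n+r-1, r)_q`. -/
theorem qhyp_succ_order (q : ℝ) (hq : 0 < q) (hq1 : q ≠ 1) (n r : ℕ)
    (hn : 1 ≤ n) (hr : 1 ≤ r) :
    qhyp q (r + 1) n =
      qint q (n + r) / qint q r * qhyp q r n -
        q ^ (r - 1) / qint q r * qbinom q (n + r - 1) r := by
  obtain ⟨m, rfl⟩ : ∃ m, n = m + 1 := ⟨n - 1, by omega⟩
  obtain ⟨s, rfl⟩ : ∃ s, r = s + 1 := ⟨r - 1, by omega⟩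
  have key := qint_mul_qhyp_succ hq hq1 (s + 1) m
  rw [show m + (s + 1) + 1 = m + 1 + (s + 1) by omega] at key
  rw [show m + 1 + (s + 1) - 1 = m + (s + 1) by omega, Nat.add_sub_cancel]
  have := qint_ne_zero hq hq1 s.succ_ne_zero
  field_simp
  apply mul_left_cancel₀ hq.ne'
  linear_combination key
end

section
/- For all positive integers $n$ and $r$, $\sum_{\ell=1}^{n} \ell\, H_{\ell}^{(r)} = \frac{n(n+r)}{r+1} H_n^{(r)} - \frac{(n-1)^{(r+1)}}{(r-1)!\,(r+1)^2}$, and this quantity also equals $\frac{n r}{r+1} H_n^{(r+1)} + \frac{1}{r+1} \binom{n+r}{r+1}$, where $(x)^{(m)} = x(x+1)\cdots(x+m-1)$ denotes the rising factorial with $(x)^{(0)} = 1$. -/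
/-- The harmonic number `H_n = ∑_{j=1}^n 1/j`. -/
noncomputable def harm (n : ℕ) : ℝ := ∑ j ∈ Finset.Icc 1 n, (1 : ℝ) / j

/-- The hyperharmonic numbers: `H_n^{(1)} = H_n` and
`H_n^{(r)} = ∑_{ℓ=1}^n H_ℓ^{(r-1)}` for `r ≥ 2` (so `H_0^{(r)} = 0`). -/
noncomputable def hyp : ℕ → ℕ → ℝ
  | 0, _ => 0
  | 1, n => harm n
  | r + 2, n => ∑ ℓ ∈ Finset.Icc 1 n, hyp (r + 1) ℓ

/-- The rising factorial `(x)^{(m)} = x (x+1) ⋯ (x+m-1)`, with `(x)^{(0)} = 1`. -/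
noncomputable def rise (x : ℝ) (m : ℕ) : ℝ := ∏ i ∈ Finset.range m, (x + i)

/-! The basic identity is `(n + r) H_n^{(r)} = r H_n^{(r+1)} + C(n+r-1, r)`, proved by induction on
`r` and then `n`. Applied at `n + 1`, it is exactly the increment needed to prove
`(r + 1) ∑_{ℓ ≤ n} ℓ H_ℓ^{(r)} = n r H_n^{(r+1)} + C(n+r, r+1)` by induction on `n`, which is the
second form. Eliminating `H_n^{(r+1)}` with the basic identity, and writing
`(n-1)^{(r+1)} = (n-1) r! C(n+r-1, r)`, gives the first. -/

lemma hyp_zero (r : ℕ) : hyp r 0 = 0 := by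
  match r with
  | 0 => rfl
  | 1 => simp [hyp, harm]
  | r + 2 => simp [hyp]

lemma hyp_one_succ (n : ℕ) : hyp 1 (n + 1) = hyp 1 n + 1 / (n + 1) := by
  simp only [hyp, harm]
  rw [Finset.sum_Icc_succ_top (by omega)]
  push_cast
  ring

lemma hyp_succ_succ (r n : ℕ) : hyp (r + 2) (n + 1) = hyp (r + 2) n + hyp (r + 1) (n + 1) :=
  Finset.sum_Icc_succ_top (by omega) _

lemma add_mul_hyp (r n : ℕ) :
    ((n : ℝ) + r + 1) * hyp (r + 1) n = (r + 1) * hyp (r + 2) n + (n + r).choose (r + 1) := by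
  induction r generalizing n with
  | zero =>
    induction n with
    | zero => simp [hyp_zero]
    | succ n ih =>
      rw [hyp_one_succ, hyp_succ_succ, hyp_one_succ]
      simp only [Nat.zero_add, Nat.choose_one_right, Nat.cast_zero, add_zero, Nat.cast_add_one]
        at ih ⊢
      field_simp
      linear_combination (n + 1 : ℝ) * ih
  | succ r ihr =>
    induction n with
    | zero => simp [hyp_zero]
    | succ n ih =>
      have rec_top := hyp_succ_succ (r + 1) n
      have rec_low := hyp_succ_succ r n
      have ihr_succ := ihr (n + 1)
      rw [show n + 1 + r = n + (r + 1) by omega] at ihr_succ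
      rw [show n + 1 + (r + 1) = n + (r + 1) + 1 by omega, Nat.choose_succ_succ']
      rw [show r + 1 + 1 = r + 2 from rfl, show r + 1 + 2 = r + 3 from rfl] at ih rec_top ⊢
      push_cast at ih ihr_succ ⊢
      linear_combination ih + ihr_succ - (r + 2 : ℝ) * rec_top + (n + r + 2 : ℝ) * rec_low

lemma mul_sum_mul_hyp (r n : ℕ) :
    ((r : ℝ) + 2) * ∑ ℓ ∈ Finset.Icc 1 n, (ℓ : ℝ) * hyp (r + 1) ℓ =
      n * (r + 1) * hyp (r + 2) n + (n + r + 1).choose (r + 2) := by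
  induction n with
  | zero => simp [hyp_zero]
  | succ n ih =>
    have key := add_mul_hyp r (n + 1)
    have rec_succ := hyp_succ_succ r n
    rw [Finset.sum_Icc_succ_top (by omega),
      show n + 1 + r + 1 = n + r + 1 + 1 by omega, Nat.choose_succ_succ']
    rw [show n + 1 + r = n + r + 1 by omega] at key
    push_cast at ih key ⊢
    linear_combination ih + key - (n * (r + 1) : ℝ) * rec_succ

lemma rise_natCast_succ (m k : ℕ) : rise m (k + 1) = m * k.factorial * (m + k).choose k := by
  have h := congrArg (Nat.cast (R := ℝ)) (Nat.ascFactorial_eq_factorial_mul_choose m k)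
  rw [Nat.ascFactorial_eq_prod_range] at h
  push_cast at h
  have h' : ∏ i ∈ Finset.range k, ((m : ℝ) + (i + 1 : ℕ)) = ∏ i ∈ Finset.range k, ((m : ℝ) + 1 + i) :=
    Finset.prod_congr rfl fun i _ => by push_cast; ring
  rw [rise, Finset.prod_range_succ', h', h]
  push_cast
  ring

/-- For positive integers `n, r`,
`∑_{ℓ=1}^n ℓ H_ℓ^{(r)}
   = (n(n+r)/(r+1)) H_n^{(r)} - (n-1)^{(r+1)} / ((r-1)! (r+1)²)
   = (nr/(r+1)) H_n^{(r+1)} + (1/(r+1)) C(n+r, r+1)`. -/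
theorem sum_mul_hyp (n r : ℕ) (hn : 1 ≤ n) (hr : 1 ≤ r) :
    (∑ ℓ ∈ Finset.Icc 1 n, (ℓ : ℝ) * hyp r ℓ =
      (n : ℝ) * (n + r) / (r + 1) * hyp r n -
        rise ((n : ℝ) - 1) (r + 1) / ((Nat.factorial (r - 1) : ℝ) * (r + 1) ^ 2)) ∧
    (∑ ℓ ∈ Finset.Icc 1 n, (ℓ : ℝ) * hyp r ℓ =
      (n : ℝ) * r / (r + 1) * hyp (r + 1) n +
        1 / (r + 1) * ((n + r).choose (r + 1) : ℝ)) := by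
  obtain ⟨r, rfl⟩ : ∃ r', r = r' + 1 := ⟨r - 1, by omega⟩
  obtain ⟨m, rfl⟩ : ∃ m, n = m + 1 := ⟨n - 1, by omega⟩
  have hsum := mul_sum_mul_hyp r (m + 1)
  have key := add_mul_hyp r (m + 1)
  have hchoose : ((m + r + 1 + 1).choose (r + 2) : ℝ) * (r + 2) =
      (m + r + 2) * (m + r + 1).choose (r + 1) := by
    exact_mod_cast (Nat.add_one_mul_choose_eq (m + r + 1) (r + 1)).symm
  have hrise : rise m (r + 2) = m * (r + 1) * r.factorial * (m + r + 1).choose (r + 1) := by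
    rw [rise_natCast_succ, Nat.factorial_succ, ← add_assoc]
    push_cast
    ring
  have : (r.factorial : ℝ) ≠ 0 := by positivity
  rw [show m + 1 + r = m + r + 1 by omega] at hsum key
  rw [Nat.cast_add_one, add_sub_cancel_right, hrise, Nat.add_sub_cancel,
    show m + 1 + (r + 1) = m + r + 1 + 1 by omega]
  push_cast at hsum key hchoose ⊢
  constructor
  · field_simp
    linear_combination (r + 2 : ℝ) * hsum - (m + 1) * (r + 2) * key + hchoose
  · field_simp
    linear_combination hsum
end

section
/- For all positive integers $n$, $r$, $p$, $\sum_{\ell=1}^{n} \ell^{p} H_{\ell}^{(r)} = A(p,r,n) H_n^{(r)} - B(p,r,n)$, where $A(p,r,n) = \sum_{\ell=0}^{p} S(p,\ell)\, \ell!\, \binom{n+r-1}{r-1}^{-1} \binom{r+\ell-1}{\ell} \binom{r+n}{r+\ell}$ and $B(p,r,n) = \sum_{\ell=0}^{p} \frac{1}{r+\ell} S(p,\ell)\, \ell!\, \binom{r+\ell-1}{\ell} \binom{r+n-1}{r+\ell}$, and $S(p,\ell)$ denotes the Stirling numbers of the second kind. -/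
/-- The Stirling numbers of the second kind `S(n,m)` (number of partitions of an
`n`-set into `m` nonempty blocks), via `S(n+1, m+1) = S(n, m) + (m+1) S(n, m+1)`. -/
def stirS : ℕ → ℕ → ℕ
  | 0, 0 => 1
  | 0, _ + 1 => 0
  | _ + 1, 0 => 0
  | n + 1, m + 1 => stirS n m + (m + 1) * stirS n (m + 1)

/-- `A(p,r,n) = ∑_{ℓ=0}^p S(p,ℓ) ℓ! C(n+r-1, r-1)⁻¹ C(r+ℓ-1, ℓ) C(r+n, r+ℓ)`. -/
noncomputable def Acoef (p r n : ℕ) : ℝ :=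
  ∑ ℓ ∈ Finset.range (p + 1),
    (stirS p ℓ : ℝ) * (Nat.factorial ℓ : ℝ) * ((n + r - 1).choose (r - 1) : ℝ)⁻¹ *
      ((r + ℓ - 1).choose ℓ : ℝ) * ((r + n).choose (r + ℓ) : ℝ)

/-- `B(p,r,n) = ∑_{ℓ=0}^p (1/(r+ℓ)) S(p,ℓ) ℓ! C(r+ℓ-1, ℓ) C(r+n-1, r+ℓ)`. -/
noncomputable def Bcoef (p r n : ℕ) : ℝ :=
  ∑ ℓ ∈ Finset.range (p + 1),
    (1 / (r + ℓ : ℝ)) * (stirS p ℓ : ℝ) * (Nat.factorial ℓ : ℝ) *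
      ((r + ℓ - 1).choose ℓ : ℝ) * ((r + n - 1).choose (r + ℓ) : ℝ)

/-!
The closed form `H_n^{(s+1)} = C(n+s, s) (H_{n+s} - H_s)` reduces everything to sums of
`C(ℓ+s, m) (H_{ℓ+s} - H_s)`, which Abel summation evaluates in closed form; applied with `m = s`
the same evaluation is also the induction step for the closed form itself. Expanding
`ℓ^p = ∑ S(p,k) k! C(ℓ,k)` and using `C(ℓ+s, s) C(ℓ, k) = C(s+k, k) C(ℓ+s, s+k)` writes
`ℓ^p H_ℓ^{(s+1)}` as such a combination with `m = s + k`.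
-/

open Finset

lemma stirS_eq_stirlingSecond : stirS = Nat.stirlingSecond := by
  funext n k
  induction n generalizing k with
  | zero => cases k <;> rfl
  | succ n ih =>
    cases k with
    | zero => rfl
    | succ k => rw [stirS, Nat.stirlingSecond_succ_succ, ih, ih, add_comm]

lemma Nat.mul_descFactorial (x k : ℕ) :
    x * x.descFactorial k = x.descFactorial (k + 1) + k * x.descFactorial k := by
  rcases le_or_gt k x with h | h
  · rw [Nat.descFactorial_succ, ← Nat.add_mul, Nat.sub_add_cancel h]
  · simp [Nat.descFactorial_of_lt h]

lemma Nat.pow_eq_sum_stirlingSecond_mul_descFactorial (x p : ℕ) :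
    x ^ p = ∑ k ∈ range (p + 1), p.stirlingSecond k * x.descFactorial k := by
  induction p with
  | zero => simp
  | succ p ih =>
    have hshift :
        ∑ k ∈ range (p + 1), (k + 1) * p.stirlingSecond (k + 1) * x.descFactorial (k + 1) =
          ∑ k ∈ range (p + 1), k * (p.stirlingSecond k * x.descFactorial k) := by
      have hlast : (p + 1) * (p.stirlingSecond (p + 1) * x.descFactorial (p + 1)) = 0 := by
        rw [Nat.stirlingSecond_eq_zero_of_lt (Nat.lt_succ_self p)]; simp
      rw [← add_zero (∑ k ∈ range (p + 1), k * _), ← hlast, ← sum_range_succ,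
        sum_range_succ' _ (p + 1)]
      simp only [zero_mul, add_zero, mul_assoc]
    calc x ^ (p + 1)
        = ∑ k ∈ range (p + 1), p.stirlingSecond k * (x * x.descFactorial k) := by
          rw [pow_succ, ih, sum_mul]; exact sum_congr rfl fun k _ => by ring
      _ = ∑ k ∈ range (p + 1), p.stirlingSecond k * x.descFactorial (k + 1)
          + ∑ k ∈ range (p + 1), k * (p.stirlingSecond k * x.descFactorial k) := by
          rw [← sum_add_distrib]
          exact sum_congr rfl fun k _ => by rw [Nat.mul_descFactorial]; ring
      _ = ∑ k ∈ range (p + 2), (p + 1).stirlingSecond k * x.descFactorial k := by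
          rw [sum_range_succ' _ (p + 1), ← hshift, ← sum_add_distrib]
          simp only [Nat.stirlingSecond_succ_succ, Nat.stirlingSecond_succ_zero, zero_mul,
            add_zero]
          exact sum_congr rfl fun k _ => by ring

lemma Nat.pow_mul_choose_eq_sum_stirlingSecond (x s p : ℕ) :
    x ^ p * (x + s).choose s =
      ∑ k ∈ range (p + 1),
        p.stirlingSecond k * k.factorial * (s + k).choose k * (x + s).choose (s + k) := by
  rw [Nat.pow_eq_sum_stirlingSecond_mul_descFactorial, sum_mul]
  refine sum_congr rfl fun k _ => ?_
  have hchoose := Nat.choose_mul (n := x + s) (Nat.le_add_right s k)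
  rw [Nat.add_sub_cancel, Nat.add_sub_cancel_left, Nat.choose_symm_add] at hchoose
  rw [Nat.descFactorial_eq_factorial_mul_choose, mul_assoc, mul_assoc, mul_assoc, mul_assoc,
    mul_comm (x.choose k), ← hchoose]
  ring

lemma harm_succ (n : ℕ) : harm (n + 1) = harm n + 1 / (n + 1) := by
  rw [harm, sum_Icc_succ_top (Nat.le_add_left 1 n), ← harm]
  push_cast; rfl

lemma Nat.cast_choose_succ_div (N m : ℕ) :
    ((N + 1).choose (m + 1) : ℝ) / (N + 1) = N.choose m / (m + 1) := by
  rw [div_eq_div_iff (by positivity) (by positivity), mul_comm _ ((N : ℝ) + 1)]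
  exact_mod_cast (Nat.add_one_mul_choose_eq N m).symm

lemma sum_choose_mul_harm_sub_harm {s m : ℕ} (hsm : s ≤ m) (n : ℕ) :
    ∑ ℓ ∈ Icc 1 n, ((ℓ + s).choose m : ℝ) * (harm (ℓ + s) - harm s) =
      ((n + s + 1).choose (m + 1) : ℝ) * (harm (n + s) - harm s) -
        ((n + s).choose (m + 1) : ℝ) / (m + 1) := by
  induction n with
  | zero =>
    simp [Nat.choose_eq_zero_of_lt (Nat.lt_succ_of_le hsm)]
  | succ n ih =>
    rw [sum_Icc_succ_top (Nat.le_add_left 1 n), ih, Nat.add_right_comm n 1 s, harm_succ (n + s)]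
    have hpascal₁ := Nat.choose_succ_succ' (n + s + 1) m
    have hpascal₂ := Nat.choose_succ_succ' (n + s) m
    have habsorb := Nat.cast_choose_succ_div (n + s) m
    rify at hpascal₁ hpascal₂
    push_cast at hpascal₁ hpascal₂ habsorb ⊢
    linear_combination
      -(harm (n + s) + 1 / (n + s + 1) - harm s) * hpascal₁ + hpascal₂ / (m + 1) - habsorb

lemma hyp_succ_eq_choose_mul (s n : ℕ) :
    hyp (s + 1) n = (n + s).choose s * (harm (n + s) - harm s) := by
  induction s generalizing n with
  | zero => simp [hyp, harm]
  | succ s ih =>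
    calc hyp (s + 2) n = ∑ ℓ ∈ Icc 1 n, hyp (s + 1) ℓ := rfl
      _ = ((n + s + 1).choose (s + 1) : ℝ) * (harm (n + s) - harm s) -
            ((n + s).choose (s + 1) : ℝ) / (s + 1) := by
        simp only [ih]; exact sum_choose_mul_harm_sub_harm le_rfl n
      _ = _ := by
        rw [← add_assoc, harm_succ (n + s), harm_succ s]
        have hpascal := Nat.choose_succ_succ' (n + s) s
        have habsorb := Nat.cast_choose_succ_div (n + s) s
        rify at hpascal
        push_cast at hpascal habsorb ⊢
        linear_combination hpascal / (s + 1) - habsorb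

theorem sum_pow_mul_hyp_general (n r p : ℕ) (hr : 1 ≤ r) :
    ∑ ℓ ∈ Finset.Icc 1 n, (ℓ : ℝ) ^ p * hyp r ℓ =
      Acoef p r n * hyp r n - Bcoef p r n := by
  obtain ⟨s, rfl⟩ := Nat.exists_eq_add_of_le' hr
  set c : ℕ → ℝ := fun k => p.stirlingSecond k * k.factorial * (s + k).choose k with hc
  have hterm (ℓ : ℕ) : (ℓ : ℝ) ^ p * hyp (s + 1) ℓ =
      ∑ k ∈ range (p + 1), c k * ((ℓ + s).choose (s + k) * (harm (ℓ + s) - harm s)) := by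
    have hnat :=
      congrArg (Nat.cast : ℕ → ℝ) (Nat.pow_mul_choose_eq_sum_stirlingSecond ℓ s p)
    push_cast at hnat
    rw [hyp_succ_eq_choose_mul, ← mul_assoc, hnat, sum_mul]
    exact sum_congr rfl fun k _ => by rw [hc]; ring
  calc ∑ ℓ ∈ Icc 1 n, (ℓ : ℝ) ^ p * hyp (s + 1) ℓ
      = ∑ k ∈ range (p + 1), c k *
          ∑ ℓ ∈ Icc 1 n, ((ℓ + s).choose (s + k) : ℝ) * (harm (ℓ + s) - harm s) := by
        simp only [hterm, mul_sum]; exact sum_comm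
    _ = ∑ k ∈ range (p + 1), c k * (((n + s + 1).choose (s + k + 1) : ℝ) *
          (harm (n + s) - harm s) - ((n + s).choose (s + k + 1) : ℝ) / (s + k + 1)) := by
        simp only [sum_choose_mul_harm_sub_harm (Nat.le_add_right s _)]; push_cast; rfl
    _ = Acoef p (s + 1) n * hyp (s + 1) n - Bcoef p (s + 1) n := by
        have hchoose : ((n + s).choose s : ℝ) ≠ 0 :=
          Nat.cast_ne_zero.mpr (Nat.choose_pos (Nat.le_add_left s n)).ne'
        rw [Acoef, Bcoef, stirS_eq_stirlingSecond, hyp_succ_eq_choose_mul, sum_mul,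
          ← sum_sub_distrib]
        refine sum_congr rfl fun k _ => ?_
        rw [hc, show n + (s + 1) - 1 = n + s by omega, show s + 1 + k - 1 = s + k by omega,
          show s + 1 + n - 1 = n + s by omega, show s + 1 + n = n + s + 1 by omega,
          Nat.add_sub_cancel, Nat.add_right_comm s 1 k]
        field_simp
        push_cast
        ring

/-- For positive integers `n, r, p`,
`∑_{ℓ=1}^n ℓ^p H_ℓ^{(r)} = A(p,r,n) H_n^{(r)} - B(p,r,n)`. -/
theorem sum_pow_mul_hyp (n r p : ℕ) (hn : 1 ≤ n) (hr : 1 ≤ r) (hp : 1 ≤ p) :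
    ∑ ℓ ∈ Finset.Icc 1 n, (ℓ : ℝ) ^ p * hyp r ℓ =
      Acoef p r n * hyp r n - Bcoef p r n :=
  sum_pow_mul_hyp_general n r p hr
end

section
/- For a real number $q$ with $q > 0$ and $q \ne 1$, and for all positive integers $n$ and $r$, $\sum_{\ell=1}^{n} q^{2n-2\ell}\, [\ell]_q\, H_{n-\ell}^{(r)}(q) = H_{n-1}^{(r+2)}(q)$. -/
lemma qint_eq_sum_range (q : ℝ) (hq1 : q ≠ 1) (n : ℕ) :
    qint q n = ∑ i ∈ Finset.range n, q ^ i := by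
  rw [geom_sum_eq hq1, qint, ← neg_div_neg_eq, neg_sub, neg_sub]

lemma sum_Ico_pow_eq_pow_mul_qint (q : ℝ) (hq1 : q ≠ 1) (k n : ℕ) :
    ∑ j ∈ Finset.Ico k n, q ^ j = q ^ k * qint q (n - k) := by
  rw [Finset.sum_Ico_eq_sum_range, qint_eq_sum_range q hq1, Finset.mul_sum]
  simp only [pow_add]

lemma qhyp_succ_zero (q : ℝ) (r : ℕ) : qhyp q (r + 1) 0 = 0 := by
  simp [qhyp]

lemma qhyp_add_two (q : ℝ) (hq1 : q ≠ 1) (r m : ℕ) :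
    qhyp q (r + 2) m = ∑ k ∈ Finset.Icc 1 m, q ^ (2 * k) * qint q (m + 1 - k) * qhyp q r k := by
  have double_sum : qhyp q (r + 2) m =
      ∑ j ∈ Finset.Ico 1 (m + 1), ∑ k ∈ Finset.Ico 1 (j + 1), q ^ j * (q ^ k * qhyp q r k) := by
    simp only [qhyp, Finset.mul_sum, Finset.Ico_add_one_right_eq_Icc]
  rw [double_sum, ← Finset.sum_Ico_Ico_comm, Finset.Ico_add_one_right_eq_Icc]
  refine Finset.sum_congr rfl fun k _ => ?_
  rw [← Finset.sum_mul, sum_Ico_pow_eq_pow_mul_qint q hq1]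
  ring

lemma sum_Icc_reflect {M : Type*} [AddCommMonoid M] (f : ℕ → M) (m : ℕ) :
    ∑ ℓ ∈ Finset.Icc 1 m, f (m + 1 - ℓ) = ∑ k ∈ Finset.Icc 1 m, f k := by
  simpa [← Finset.Ico_add_one_right_eq_Icc] using
    Finset.sum_Ico_reflect f 1 (n := m + 1) (Nat.le_succ (m + 1))

theorem sum_backward_qint_mul_qhyp_eq_qhyp_general (q : ℝ) (hq1 : q ≠ 1) (n r : ℕ)
    (hn : 1 ≤ n) (hr : 1 ≤ r) :
    ∑ ℓ ∈ Finset.Icc 1 n, q ^ (2 * n - 2 * ℓ) * qint q ℓ * qhyp q r (n - ℓ) =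
      qhyp q (r + 2) (n - 1) := by
  obtain ⟨m, rfl⟩ := Nat.exists_eq_add_of_le' hn
  obtain ⟨s, rfl⟩ := Nat.exists_eq_add_of_le' hr
  rw [Nat.add_sub_cancel, qhyp_add_two q hq1, Finset.sum_Icc_succ_top (Nat.le_add_left 1 m),
    Nat.sub_self, Nat.sub_self, qhyp_succ_zero, mul_zero, add_zero, ← sum_Icc_reflect _ m]
  refine Finset.sum_congr rfl fun ℓ hℓ => ?_
  rw [← Nat.mul_sub, Nat.sub_sub_self (by grind)]

/-- For `q > 0`, `q ≠ 1` and positive integers `n, r`,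
`∑_{ℓ=1}^n q^{2n-2ℓ} [ℓ]_q H_{n-ℓ}^{(r)}(q) = H_{n-1}^{(r+2)}(q)`. -/
theorem sum_backward_qint_mul_qhyp_eq_qhyp (q : ℝ) (hq : 0 < q) (hq1 : q ≠ 1) (n r : ℕ)
    (hn : 1 ≤ n) (hr : 1 ≤ r) :
    ∑ ℓ ∈ Finset.Icc 1 n, q ^ (2 * n - 2 * ℓ) * qint q ℓ * qhyp q r (n - ℓ) =
      qhyp q (r + 2) (n - 1) :=
  sum_backward_qint_mul_qhyp_eq_qhyp_general q hq1 n r hn hr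
end
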